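/- The benefit function B : 2^V → ℝ≥0 is submodular: for every R ⊆ S ⊆ V and every u ∈ V \ S, B(R ∪ {u}) − B(R) ≥ B(S ∪ {u}) − B(S). -/

import Mathlib

/-! For a fixed query `q`, the nodes of `R` that are useful for `q` are the topmost nodes of `R`
whose variables are summed out by `q`. Their subtrees are pairwise disjoint and together cover
exactly the union of the subtrees of all nodes of `R` whose variables are summed out, so
`B(R) = Σ_q Pr(q) · Σ_{x covered} c(x)`. A weighted coverage function with nonnegative weights
is submodular, and so is a nonnegative combination of such functions. -/

open scoped Classical

section TreeDefs

variable {V : Type*}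

/-- The set of strict ancestors of `u` in the rooted tree given by `parent`. -/
def ancSet (parent : V → V) (u : V) : Set V :=
  {v | v ≠ u ∧ ∃ n : ℕ, parent^[n] u = v}

/-- The set of nodes of the subtree rooted at `u` (including `u`). -/
def subtreeSet (parent : V → V) (u : V) : Set V :=
  {x | ∃ n : ℕ, parent^[n] x = u}

/-- The set of nodes strictly between `u` and its ancestor `v`. -/
def pathSet (parent : V → V) (u v : V) : Set V :=
  {w | w ∈ ancSet parent u ∧ v ∈ ancSet parent w}

/-- A node is internal if it has at least one child. -/
def isInternal (parent : V → V) (u : V) : Prop :=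
  ∃ w, w ≠ u ∧ parent w = u

/-- `T` is binary with left-child map `lc` and right-child map `rc`. -/
def isBinary (parent lc rc : V → V) : Prop :=
  ∀ u, isInternal parent u →
    lc u ≠ rc u ∧ parent (lc u) = u ∧ parent (rc u) = u ∧
    lc u ≠ u ∧ rc u ≠ u ∧
    ∀ w, w ≠ u → parent w = u → w = lc u ∨ w = rc u

/-- The usefulness indicator `I_q(u|R)` of node `u` for a query with
summed-out variables `Zq`, with respect to the materialized set `R`. -/
noncomputable def useful {α : Type*} (parent : V → V) (vars : V → Set α)
    (Zq : Set α) (u : V) (R : Set V) : ℝ :=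
  if vars u ⊆ Zq ∧ ∀ v ∈ ancSet parent u ∩ R, ¬ vars v ⊆ Zq then 1 else 0

/-- The expected usefulness `E[I(u|R)]` over the query distribution. -/
noncomputable def eInd {α Q : Type*} [Fintype Q] (parent : V → V) (vars : V → Set α)
    (Z : Q → Set α) (Pr : Q → ℝ) (u : V) (R : Set V) : ℝ :=
  ∑ q : Q, Pr q * useful parent vars (Z q) u R

/-- The utility `U(u) = Σ_{x ∈ subtree(u)} c(x)`. -/
noncomputable def util [Fintype V] (parent : V → V) (c : V → ℝ) (u : V) : ℝ :=
  ∑ x ∈ Finset.univ.filter (fun x => x ∈ subtreeSet parent u), c x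

/-- The benefit `B(R) = Σ_{u ∈ R} E[I(u|R)] · U(u)`. -/
noncomputable def benefit [Fintype V] {α Q : Type*} [Fintype Q]
    (parent : V → V) (vars : V → Set α) (Z : Q → Set α) (Pr : Q → ℝ)
    (c : V → ℝ) (R : Finset V) : ℝ :=
  ∑ u ∈ R, eInd parent vars Z Pr u (↑R) * util parent c u

/-- The partial benefit `pB_u(R) = Σ_{w ∈ R ∩ subtree(u)} E[I(w|R)] · U(w)`. -/
noncomputable def pB [Fintype V] {α Q : Type*} [Fintype Q]
    (parent : V → V) (vars : V → Set α) (Z : Q → Set α) (Pr : Q → ℝ)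
    (c : V → ℝ) (u : V) (R : Finset V) : ℝ :=
  ∑ w ∈ R.filter (fun w => w ∈ subtreeSet parent u),
    eInd parent vars Z Pr w (↑R) * util parent c w

end TreeDefs

section Tree

variable {V : Type*} {parent : V → V}

lemma mem_subtreeSet_self (u : V) : u ∈ subtreeSet parent u := ⟨0, rfl⟩

lemma mem_subtreeSet_trans {x y z : V} (hxy : x ∈ subtreeSet parent y)
    (hyz : y ∈ subtreeSet parent z) : x ∈ subtreeSet parent z := by
  obtain ⟨m, rfl⟩ := hxy
  obtain ⟨n, rfl⟩ := hyz
  exact ⟨n + m, Function.iterate_add_apply _ _ _ _⟩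

lemma mem_subtreeSet_total {x w₁ w₂ : V} (h₁ : x ∈ subtreeSet parent w₁)
    (h₂ : x ∈ subtreeSet parent w₂) :
    w₁ ∈ subtreeSet parent w₂ ∨ w₂ ∈ subtreeSet parent w₁ := by
  obtain ⟨n₁, rfl⟩ := h₁
  obtain ⟨n₂, rfl⟩ := h₂
  rcases le_total n₁ n₂ with h | h
  · refine Or.inl ⟨n₂ - n₁, ?_⟩
    rw [← Function.iterate_add_apply, Nat.sub_add_cancel h]
  · refine Or.inr ⟨n₁ - n₂, ?_⟩
    rw [← Function.iterate_add_apply, Nat.sub_add_cancel h]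

lemma mem_ancSet_or_mem_ancSet_of_ne {x w₁ w₂ : V} (h₁ : x ∈ subtreeSet parent w₁)
    (h₂ : x ∈ subtreeSet parent w₂) (hne : w₁ ≠ w₂) :
    w₁ ∈ ancSet parent w₂ ∨ w₂ ∈ ancSet parent w₁ :=
  (mem_subtreeSet_total h₁ h₂).elim (fun h => Or.inr ⟨hne.symm, h⟩)
    (fun h => Or.inl ⟨hne, h⟩)

lemma exists_forall_mem_subtreeSet {x : V} {F : Finset V} (hF : F.Nonempty)
    (hx : ∀ w ∈ F, x ∈ subtreeSet parent w) : ∃ t ∈ F, ∀ w ∈ F, w ∈ subtreeSet parent t := by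
  induction hF using Finset.Nonempty.cons_induction with
  | singleton a => exact ⟨a, by simp, by simp [mem_subtreeSet_self]⟩
  | cons a F ha hF ih =>
    simp only [Finset.mem_cons, forall_eq_or_imp] at hx ⊢
    obtain ⟨t, htF, htop⟩ := ih hx.2
    rcases mem_subtreeSet_total hx.1 (hx.2 t htF) with hat | hta
    · exact ⟨t, Or.inr htF, hat, htop⟩
    · exact ⟨a, Or.inl rfl, mem_subtreeSet_self a,
        fun w hw => mem_subtreeSet_trans (htop w hw) hta⟩

variable {root : V}

lemma eq_root_of_isPeriodicPt (hroot : parent root = root)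
    (hreach : ∀ u, ∃ n : ℕ, parent^[n] u = root) {x : V} {m : ℕ}
    (hx : Function.IsPeriodicPt parent m x) (hm : 0 < m) : x = root := by
  obtain ⟨n, hn⟩ := hreach x
  have hle : n ≤ m * n := Nat.le_mul_of_pos_left n hm
  rw [← (hx.mul_const n).eq, ← Nat.sub_add_cancel hle, Function.iterate_add_apply, hn,
    Function.iterate_fixed hroot]

lemma notMem_ancSet_of_mem_ancSet (hroot : parent root = root)
    (hreach : ∀ u, ∃ n : ℕ, parent^[n] u = root) {u v : V} (h : v ∈ ancSet parent u) :
    u ∉ ancSet parent v := by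
  rintro ⟨-, b, hb⟩
  obtain ⟨hne, a, ha⟩ := h
  have hab : 0 < a + b := by
    rcases Nat.eq_zero_or_pos a with rfl | ha0
    · exact absurd ha.symm hne
    · omega
  have hu : Function.IsPeriodicPt parent (b + a) u := by
    rw [Function.IsPeriodicPt, Function.IsFixedPt, Function.iterate_add_apply, ha, hb]
  have hv : Function.IsPeriodicPt parent (a + b) v := by
    rw [Function.IsPeriodicPt, Function.IsFixedPt, Function.iterate_add_apply, hb, ha]
  exact hne ((eq_root_of_isPeriodicPt hroot hreach hv hab).trans
    (eq_root_of_isPeriodicPt hroot hreach hu (by omega)).symm)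

end Tree

section Coverage

variable {ι X : Type*} [DecidableEq ι] [DecidableEq X]

lemma sum_biUnion_insert_sub (A : ι → Finset X) (c : X → ℝ) (T : Finset ι) (u : ι) :
    ∑ x ∈ (insert u T).biUnion A, c x - ∑ x ∈ T.biUnion A, c x =
      ∑ x ∈ A u \ T.biUnion A, c x := by
  rw [Finset.biUnion_insert, ← Finset.sum_sdiff Finset.subset_union_right,
    Finset.union_sdiff_right, add_sub_cancel_right]

lemma sum_biUnion_insert_sub_le_of_subset (A : ι → Finset X) {c : X → ℝ} (hc : ∀ x, 0 ≤ c x)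
    {R S : Finset ι} (hRS : R ⊆ S) (u : ι) :
    ∑ x ∈ (insert u S).biUnion A, c x - ∑ x ∈ S.biUnion A, c x ≤
      ∑ x ∈ (insert u R).biUnion A, c x - ∑ x ∈ R.biUnion A, c x := by
  rw [sum_biUnion_insert_sub, sum_biUnion_insert_sub]
  exact Finset.sum_le_sum_of_subset_of_nonneg
    (Finset.sdiff_subset_sdiff le_rfl (Finset.biUnion_subset_biUnion_of_subset_left A hRS))
    (fun x _ _ => hc x)

end Coverage

section Query

variable {V α : Type*} [Fintype V] {parent : V → V} {vars : V → Set α} {Zq : Set α}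

def IsUseful (parent : V → V) (vars : V → Set α) (Zq : Set α) (u : V) (R : Set V) : Prop :=
  vars u ⊆ Zq ∧ ∀ v ∈ ancSet parent u ∩ R, ¬ vars v ⊆ Zq

noncomputable def coverSet (parent : V → V) (vars : V → Set α) (Zq : Set α) (w : V) :
    Finset V :=
  Finset.univ.filter fun x => vars w ⊆ Zq ∧ x ∈ subtreeSet parent w

lemma useful_mul_eq_ite {u : V} {R : Set V} (y : ℝ) :
    useful parent vars Zq u R * y = if IsUseful parent vars Zq u R then y else 0 := by
  unfold useful IsUseful
  split_ifs <;> simp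

lemma pairwiseDisjoint_subtree_of_isUseful (R : Finset V) :
    (↑(R.filter fun w => IsUseful parent vars Zq w ↑R) : Set V).PairwiseDisjoint
      fun w => Finset.univ.filter (· ∈ subtreeSet parent w) := by
  intro w₁ hw₁ w₂ hw₂ hne
  simp only [Finset.mem_coe, Finset.mem_filter] at hw₁ hw₂
  rw [Function.onFun, Finset.disjoint_left]
  intro x hx₁ hx₂
  simp only [Finset.mem_filter, Finset.mem_univ, true_and] at hx₁ hx₂
  rcases mem_ancSet_or_mem_ancSet_of_ne hx₁ hx₂ hne with h | h
  · exact hw₂.2.2 w₁ ⟨h, hw₁.1⟩ hw₁.2.1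
  · exact hw₁.2.2 w₂ ⟨h, hw₂.1⟩ hw₂.2.1

variable [DecidableEq V] {root : V}

lemma biUnion_subtree_isUseful_eq (hroot : parent root = root)
    (hreach : ∀ u, ∃ n : ℕ, parent^[n] u = root) (R : Finset V) :
    (R.filter fun w => IsUseful parent vars Zq w ↑R).biUnion
        (fun w => Finset.univ.filter (· ∈ subtreeSet parent w)) =
      R.biUnion (coverSet parent vars Zq) := by
  ext x
  simp only [Finset.mem_biUnion, Finset.mem_filter, Finset.mem_univ, true_and, coverSet]
  constructor
  · rintro ⟨w, ⟨hwR, hw⟩, hx⟩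
    exact ⟨w, hwR, hw.1, hx⟩
  · rintro ⟨w, hwR, hwZ, hx⟩
    set F := R.filter fun v => vars v ⊆ Zq ∧ x ∈ subtreeSet parent v
    obtain ⟨t, htF, htop⟩ := exists_forall_mem_subtreeSet (F := F)
      ⟨w, Finset.mem_filter.2 ⟨hwR, hwZ, hx⟩⟩ (fun v hv => (Finset.mem_filter.1 hv).2.2)
    obtain ⟨htR, htZ, hxt⟩ := Finset.mem_filter.1 htF
    refine ⟨t, ⟨htR, htZ, ?_⟩, hxt⟩
    rintro v ⟨hvt, hvR⟩ hvZ
    have hvF : v ∈ F := Finset.mem_filter.2 ⟨hvR, hvZ, mem_subtreeSet_trans hxt hvt.2⟩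
    exact notMem_ancSet_of_mem_ancSet hroot hreach hvt ⟨hvt.1.symm, htop v hvF⟩

lemma sum_useful_mul_util (hroot : parent root = root)
    (hreach : ∀ u, ∃ n : ℕ, parent^[n] u = root) (c : V → ℝ) (R : Finset V) :
    ∑ w ∈ R, useful parent vars Zq w ↑R * util parent c w =
      ∑ x ∈ R.biUnion (coverSet parent vars Zq), c x := by
  simp_rw [useful_mul_eq_ite]
  rw [← Finset.sum_filter, ← biUnion_subtree_isUseful_eq hroot hreach,
    Finset.sum_biUnion (pairwiseDisjoint_subtree_of_isUseful R)]
  rfl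

end Query

lemma benefit_eq_sum_coverSet {V α Q : Type*} [Fintype V] [DecidableEq V] [Fintype Q]
    {root : V} {parent : V → V} (hroot : parent root = root)
    (hreach : ∀ u, ∃ n : ℕ, parent^[n] u = root) (vars : V → Set α) (Z : Q → Set α)
    (Pr : Q → ℝ) (c : V → ℝ) (R : Finset V) :
    benefit parent vars Z Pr c R =
      ∑ q, Pr q * ∑ x ∈ R.biUnion (coverSet parent vars (Z q)), c x := by
  simp_rw [← sum_useful_mul_util hroot hreach, Finset.mul_sum]
  rw [benefit, Finset.sum_comm]
  simp_rw [eInd, Finset.sum_mul, mul_assoc]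

theorem benefit_submodular_general {V α Q : Type*} [Fintype V] [DecidableEq V] [Fintype Q]
    (root : V) (parent : V → V)
    (hroot : parent root = root)
    (hreach : ∀ u, ∃ n : ℕ, parent^[n] u = root)
    (vars : V → Set α)
    (Z : Q → Set α) (Pr : Q → ℝ)
    (hPr0 : ∀ q, 0 ≤ Pr q)
    (c : V → ℝ) (hc : ∀ x, 0 ≤ c x)
    (R S : Finset V) (hRS : R ⊆ S) (u : V) :
    benefit parent vars Z Pr c (insert u S) - benefit parent vars Z Pr c S ≤
      benefit parent vars Z Pr c (insert u R) - benefit parent vars Z Pr c R := by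
  simp only [benefit_eq_sum_coverSet hroot hreach, ← Finset.sum_sub_distrib, ← mul_sub]
  exact Finset.sum_le_sum fun q _ => mul_le_mul_of_nonneg_left
    (sum_biUnion_insert_sub_le_of_subset _ hc hRS u) (hPr0 q)

/-- the benefit function is submodular: for every `R ⊆ S ⊆ V`
and `u ∈ V \ S`, `B(R ∪ {u}) − B(R) ≥ B(S ∪ {u}) − B(S)`. -/
theorem benefit_submodular {V α Q : Type*} [Fintype V] [DecidableEq V] [Fintype Q]
    (root : V) (parent : V → V)
    (hroot : parent root = root)
    (hreach : ∀ u, ∃ n : ℕ, parent^[n] u = root)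
    (vars : V → Set α)
    (hvars : ∀ u v : V, v ∈ ancSet parent u → vars u ⊆ vars v)
    (Z : Q → Set α) (Pr : Q → ℝ)
    (hPr0 : ∀ q, 0 ≤ Pr q) (hPr1 : ∑ q : Q, Pr q = 1)
    (c : V → ℝ) (hc : ∀ x, 0 ≤ c x)
    (R S : Finset V) (hRS : R ⊆ S) (u : V) (hu : u ∉ S) :
    benefit parent vars Z Pr c (insert u S) - benefit parent vars Z Pr c S ≤
      benefit parent vars Z Pr c (insert u R) - benefit parent vars Z Pr c R :=
  benefit_submodular_general root parent hroot hreach vars Z Pr hPr0 c hc R S hRS u
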